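/- arXiv:2308.10838 — 2 statements merged into one kernel-verified Lean document; each statement's English description precedes it below -/
import Mathlib

section
/- Let G = (L, R, E) be a bipartite graph such that deg_G(a) ≤ 2 for every a ∈ R, and let u ∈ L with deg_G(u) ≥ 2. Then β_G(u) = C(deg_G(u), 2) if and only if there exists v ∈ L with v ≠ u such that N_G(u) ⊆ N_G(v). -/
open Finset

variable {L R : Type*} [Fintype L] [DecidableEq L] [Fintype R] [DecidableEq R]

/-- The set of neighbors of a left node `u` in the bipartite graph with edge set `E`. -/
def nbrs (E : Finset (L × R)) (u : L) : Finset R :=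
  (E.filter (fun e => e.1 = u)).image Prod.snd

/-- The degree of a left node. -/
def ldeg (E : Finset (L × R)) (u : L) : ℕ := (nbrs E u).card

/-- The set of neighbors of a right node `a` in the bipartite graph with edge set `E`. -/
def rnbrs (E : Finset (L × R)) (a : R) : Finset L :=
  (E.filter (fun e => e.2 = a)).image Prod.fst

/-- The degree of a right node. -/
def rdeg (E : Finset (L × R)) (a : R) : ℕ := (rnbrs E a).card

/-- The butterflies of the bipartite graph with edge set `E`: a butterfly is a pair of
two left nodes and two right nodes all pairwise connected. -/
def butterflies (E : Finset (L × R)) : Finset (Finset L × Finset R) :=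
  Finset.univ.filter
    (fun B => B.1.card = 2 ∧ B.2.card = 2 ∧ ∀ u ∈ B.1, ∀ a ∈ B.2, (u, a) ∈ E)

/-- The total number of butterflies. -/
def bfc (E : Finset (L × R)) : ℕ := (butterflies E).card

/-- The number of butterflies containing the left node `u`. -/
def bfcn (E : Finset (L × R)) (u : L) : ℕ :=
  ((butterflies E).filter (fun B => u ∈ B.1)).card

/-- The number of butterflies containing both left nodes `u` and `v`. -/
def bfcnn (E : Finset (L × R)) (u v : L) : ℕ :=
  ((butterflies E).filter (fun B => u ∈ B.1 ∧ v ∈ B.1)).card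

/-- A `q`-BSO transforming edge set `E` into edge set `E'`. -/
def IsBSOStep (q : ℕ) (E E' : Finset (L × R)) : Prop :=
  1 ≤ q ∧ ∃ (S : Fin q → L × R) (σ : Equiv.Perm (Fin q)),
    Function.Injective S ∧ (∀ j, S j ∈ E) ∧ (∀ j, σ j ≠ j) ∧
    (∀ j, ((S j).1, (S (σ j)).2) ∉ E) ∧
    E' = (E \ Finset.image S Finset.univ) ∪
      Finset.image (fun j => ((S j).1, (S (σ j)).2)) Finset.univ


lemma mem_nbrs' {L R : Type*} [DecidableEq L] [DecidableEq R] {E : Finset (L × R)} {u : L}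
    {a : R} : a ∈ nbrs E u ↔ (u, a) ∈ E := by
  simp only [nbrs, Finset.mem_image, Finset.mem_filter]
  constructor
  · rintro ⟨⟨x, y⟩, ⟨hx, rfl⟩, rfl⟩; exact hx
  · intro h; exact ⟨(u, a), ⟨h, rfl⟩, rfl⟩

lemma mem_rnbrs' {L R : Type*} [DecidableEq L] [DecidableEq R] {E : Finset (L × R)} {v : L}
    {a : R} : v ∈ rnbrs E a ↔ (v, a) ∈ E := by
  simp only [rnbrs, Finset.mem_image, Finset.mem_filter]
  constructor
  · rintro ⟨⟨x, y⟩, ⟨hx, rfl⟩, rfl⟩; exact hx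
  · intro h; exact ⟨(v, a), ⟨h, rfl⟩, rfl⟩

lemma rkey {L R : Type*} [Fintype L] [DecidableEq L] [Fintype R] [DecidableEq R]
    {E : Finset (L × R)} (hR : ∀ a : R, rdeg E a ≤ 2) {a : R} {u v w : L}
    (hu : (u, a) ∈ E) (hv : (v, a) ∈ E) (hw : (w, a) ∈ E) (hvu : v ≠ u) (hwu : w ≠ u) :
    v = w := by
  by_contra hvw
  have hsub : ({u, v, w} : Finset L) ⊆ rnbrs E a := by
    intro x hx
    simp only [Finset.mem_insert, Finset.mem_singleton] at hx
    rcases hx with rfl | rfl | rfl <;> exact mem_rnbrs'.mpr ‹_›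
  have h3 : ({u, v, w} : Finset L).card = 3 := by
    rw [Finset.card_insert_of_notMem (by simp [Ne.symm hvu, Ne.symm hwu]),
      Finset.card_insert_of_notMem (by simp [hvw]), Finset.card_singleton]
  have := Finset.card_le_card hsub
  rw [h3] at this
  exact absurd (this.trans (hR a)) (by norm_num)

lemma pair_eq_of_card_two {L : Type*} [DecidableEq L] {s : Finset L} {u v : L}
    (hs : s.card = 2) (hu : u ∈ s) (hv : v ∈ s) (hvu : v ≠ u) : s = {u, v} := by
  have hsub : ({u, v} : Finset L) ⊆ s := by
    intro x hx
    simp only [Finset.mem_insert, Finset.mem_singleton] at hx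
    rcases hx with rfl | rfl <;> assumption
  refine (Finset.eq_of_subset_of_card_le hsub ?_).symm
  rw [hs, Finset.card_insert_of_notMem (by simp [Ne.symm hvu]), Finset.card_singleton]

/-- If every right node has degree at most 2 and `u` is a left node of degree at least 2,
then `u` belongs to exactly `C(deg u, 2)` butterflies iff some other left node `v`
has `N(u) ⊆ N(v)`. -/
theorem stmt_4 {L R : Type*} [Fintype L] [DecidableEq L] [Fintype R] [DecidableEq R]
    (E : Finset (L × R)) (hR : ∀ a : R, rdeg E a ≤ 2) (u : L) (hu : 2 ≤ ldeg E u) :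
    bfcn E u = (ldeg E u).choose 2 ↔ ∃ v : L, v ≠ u ∧ nbrs E u ⊆ nbrs E v := by
  classical
  set N := nbrs E u with hN
  have key : ∀ {a : R} {v w : L}, (u, a) ∈ E → (v, a) ∈ E → (w, a) ∈ E → v ≠ u → w ≠ u →
      v = w := fun ha hv hw hvu hwu => rkey hR ha hv hw hvu hwu
  set P := N.powersetCard 2 with hP
  set T := P.filter (fun s => ∃ v, v ≠ u ∧ ∀ a ∈ s, (v, a) ∈ E) with hT
  have hcard : bfcn E u = T.card := by
    apply Finset.card_bij (fun B _ => B.2)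
    · rintro ⟨s, t⟩ hB
      simp only [butterflies, Finset.mem_filter, Finset.mem_univ, true_and] at hB
      obtain ⟨⟨hs2, ht2, hcomp⟩, hus⟩ := hB
      obtain ⟨v, hvs, hvu⟩ := Finset.exists_mem_ne (show 1 < s.card by omega) u
      refine Finset.mem_filter.mpr ⟨Finset.mem_powersetCard.mpr ⟨?_, ht2⟩, v, hvu, ?_⟩
      · intro a ha; exact mem_nbrs'.mpr (hcomp u hus a ha)
      · intro a ha; exact hcomp v hvs a ha
    · rintro ⟨s, t⟩ hB ⟨s', t'⟩ hB' (h2 : t = t')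
      simp only [butterflies, Finset.mem_filter, Finset.mem_univ, true_and] at hB hB'
      obtain ⟨⟨hs2, ht2, hcomp⟩, hus⟩ := hB
      obtain ⟨⟨hs2', ht2', hcomp'⟩, hus'⟩ := hB'
      obtain ⟨v, hvs, hvu⟩ := Finset.exists_mem_ne (show 1 < s.card by omega) u
      obtain ⟨v', hvs', hvu'⟩ := Finset.exists_mem_ne (show 1 < s'.card by omega) u
      obtain ⟨a, ha⟩ := Finset.card_pos.mp (by omega : 0 < t.card)
      have hvv : v = v' := by
        refine key (hcomp u hus a ha) (hcomp v hvs a ha) ?_ hvu hvu'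
        exact hcomp' v' hvs' a (h2 ▸ ha)
      have : s = s' := by
        rw [pair_eq_of_card_two hs2 hus hvs hvu, hvv,
          pair_eq_of_card_two hs2' hus' hvs' hvu']
      simp [this, h2]
    · intro t ht
      rw [hT, Finset.mem_filter] at ht
      obtain ⟨hpc, v, hvu, hv⟩ := ht
      obtain ⟨hsub, ht2⟩ := Finset.mem_powersetCard.mp hpc
      refine ⟨({u, v}, t), ?_, rfl⟩
      simp only [butterflies, Finset.mem_filter, Finset.mem_univ, true_and]
      refine ⟨⟨?_, ht2, ?_⟩, by simp⟩
      · rw [Finset.card_insert_of_notMem (by simp [Ne.symm hvu]), Finset.card_singleton]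
      · intro x hx a ha
        simp only [Finset.mem_insert, Finset.mem_singleton] at hx
        rcases hx with rfl | rfl
        · exact mem_nbrs'.mp (hsub ha)
        · exact hv a ha
  have hchoose : (ldeg E u).choose 2 = P.card := by
    rw [hP, Finset.card_powersetCard]; rfl
  rw [hcard, hchoose]
  have hTP : T ⊆ P := Finset.filter_subset _ _
  constructor
  · intro hc
    have hTeq : T = P := Finset.eq_of_subset_of_card_le hTP (le_of_eq hc.symm)
    have hall : ∀ s ∈ P, ∃ v, v ≠ u ∧ ∀ a ∈ s, (v, a) ∈ E := by
      intro s hs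
      have := hTeq ▸ hs
      exact (Finset.mem_filter.mp this).2
    obtain ⟨a0, ha0, a1, ha1, hne⟩ := Finset.one_lt_card.mp (show (1:ℕ) < N.card from lt_of_lt_of_le one_lt_two hu)
    have hmemP : ∀ a ∈ N, a ≠ a0 → ({a0, a} : Finset R) ∈ P := by
      intro a ha hne'
      refine Finset.mem_powersetCard.mpr ⟨?_, ?_⟩
      · intro x hx
        simp only [Finset.mem_insert, Finset.mem_singleton] at hx
        rcases hx with rfl | rfl <;> assumption
      · rw [Finset.card_insert_of_notMem (by simp [Ne.symm hne']), Finset.card_singleton]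
    obtain ⟨v, hvu, hv⟩ := hall _ (hmemP a1 ha1 (Ne.symm hne))
    refine ⟨v, hvu, fun a ha => ?_⟩
    by_cases hcase : a = a0
    · rw [hcase]; exact mem_nbrs'.mpr (hv a0 (by simp))
    · obtain ⟨w, hwu, hw⟩ := hall _ (hmemP a ha hcase)
      have hwv : w = v :=
        key (mem_nbrs'.mp ha0) (hw a0 (by simp)) (hv a0 (by simp)) hwu hvu
      exact mem_nbrs'.mpr (hwv ▸ hw a (by simp))
  · rintro ⟨v, hvu, hsub⟩
    congr 1
    rw [hT, Finset.filter_eq_self]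
    intro s hs
    exact ⟨v, hvu, fun a ha => mem_rnbrs'.mp (by
      exact mem_rnbrs'.mpr (mem_nbrs'.mp (hsub ((Finset.mem_powersetCard.mp hs).1 ha))))⟩
end

section
/- Let G' = (L, R, E') and G'' = (L, R, E'') be bipartite graphs on the same vertex sets with E' ≠ E'' and deg_{G'}(v) = deg_{G''}(v) for every v ∈ L ∪ R. Then, with q := |E' ∖ E''|, there exists a q-BSO (S, σ) applicable to G' whose application transforms G' into G'', i.e., S enumerates the edges (u_1,a_1),…,(u_q,a_q) of E' ∖ E'' and (E' ∖ S) ∪ {(u_j, a_{σ(j)}) : j ∈ {1,…,q}} = E''. -/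
open Finset

variable {L R : Type*} [Fintype L] [DecidableEq L] [Fintype R] [DecidableEq R]

set_option linter.unusedSectionVars false

lemma fiber_card_fst (D : Finset (L × R)) (u : L) :
    Fintype.card {a : R // (u, a) ∈ D} = (D.filter (fun e => e.1 = u)).card := by
  rw [Fintype.card_subtype]
  apply Finset.card_bij (fun a _ => (u, a))
  · intro a ha
    simp only [mem_filter, mem_univ, true_and] at ha ⊢
    exact ⟨ha, trivial⟩
  · intro a _ b _ h
    exact (Prod.mk.injEq _ _ _ _).mp h |>.2
  · intro e he
    simp only [mem_filter, mem_univ, true_and] at he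
    refine ⟨e.2, ?_, ?_⟩
    · simp only [mem_filter, mem_univ, true_and]
      rw [← he.2]; exact he.1
    · rw [← he.2]

lemma fiber_card_snd (D : Finset (L × R)) (a : R) :
    Fintype.card {u : L // (u, a) ∈ D} = (D.filter (fun e => e.2 = a)).card := by
  rw [Fintype.card_subtype]
  apply Finset.card_bij (fun u _ => (u, a))
  · intro u hu
    simp only [mem_filter, mem_univ, true_and] at hu ⊢
    exact ⟨hu, trivial⟩
  · intro u _ v _ h
    exact (Prod.mk.injEq _ _ _ _).mp h |>.1
  · intro e he
    simp only [mem_filter, mem_univ, true_and] at he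
    refine ⟨e.1, ?_, ?_⟩
    · simp only [mem_filter, mem_univ, true_and]
      rw [← he.2]; exact he.1
    · rw [← he.2]

lemma exists_fst_equiv (D D' : Finset (L × R))
    (h : ∀ u, (D.filter (fun e => e.1 = u)).card = (D'.filter (fun e => e.1 = u)).card) :
    ∃ f : {x // x ∈ D} ≃ {x // x ∈ D'}, ∀ x, ((f x : L × R)).1 = (x : L × R).1 := by
  let e1 : {x // x ∈ D} ≃ Σ u : L, {a : R // (u, a) ∈ D} :=
    { toFun := fun x => ⟨x.1.1, x.1.2, x.2⟩
      invFun := fun p => ⟨(p.1, p.2.1), p.2.2⟩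
      left_inv := fun x => rfl
      right_inv := fun p => rfl }
  let e2 : {x // x ∈ D'} ≃ Σ u : L, {a : R // (u, a) ∈ D'} :=
    { toFun := fun x => ⟨x.1.1, x.1.2, x.2⟩
      invFun := fun p => ⟨(p.1, p.2.1), p.2.2⟩
      left_inv := fun x => rfl
      right_inv := fun p => rfl }
  have fe : ∀ u : L, {a : R // (u, a) ∈ D} ≃ {a : R // (u, a) ∈ D'} := fun u =>
    Fintype.equivOfCardEq (by rw [fiber_card_fst, fiber_card_fst, h])
  exact ⟨e1.trans ((Equiv.sigmaCongrRight fe).trans e2.symm), fun x => rfl⟩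

lemma exists_snd_equiv (D D' : Finset (L × R))
    (h : ∀ a, (D.filter (fun e => e.2 = a)).card = (D'.filter (fun e => e.2 = a)).card) :
    ∃ f : {x // x ∈ D} ≃ {x // x ∈ D'}, ∀ x, ((f x : L × R)).2 = (x : L × R).2 := by
  let e1 : {x // x ∈ D} ≃ Σ a : R, {u : L // (u, a) ∈ D} :=
    { toFun := fun x => ⟨x.1.2, x.1.1, x.2⟩
      invFun := fun p => ⟨(p.2.1, p.1), p.2.2⟩
      left_inv := fun x => rfl
      right_inv := fun p => rfl }
  let e2 : {x // x ∈ D'} ≃ Σ a : R, {u : L // (u, a) ∈ D'} :=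
    { toFun := fun x => ⟨x.1.2, x.1.1, x.2⟩
      invFun := fun p => ⟨(p.2.1, p.1), p.2.2⟩
      left_inv := fun x => rfl
      right_inv := fun p => rfl }
  have fe : ∀ a : R, {u : L // (u, a) ∈ D} ≃ {u : L // (u, a) ∈ D'} := fun a =>
    Fintype.equivOfCardEq (by rw [fiber_card_snd, fiber_card_snd, h])
  exact ⟨e1.trans ((Equiv.sigmaCongrRight fe).trans e2.symm), fun x => rfl⟩

lemma ldeg_eq_filter (E : Finset (L × R)) (u : L) :
    ldeg E u = (E.filter (fun e => e.1 = u)).card := by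
  unfold ldeg nbrs
  apply Finset.card_image_of_injOn
  intro e he f hf h
  simp only [Finset.coe_filter, Set.mem_setOf_eq] at he hf
  exact Prod.ext (he.2.trans hf.2.symm) h

lemma rdeg_eq_filter (E : Finset (L × R)) (a : R) :
    rdeg E a = (E.filter (fun e => e.2 = a)).card := by
  unfold rdeg rnbrs
  apply Finset.card_image_of_injOn
  intro e he f hf h
  simp only [Finset.coe_filter, Set.mem_setOf_eq] at he hf
  exact Prod.ext h (he.2.trans hf.2.symm)

/-- Any two distinct bipartite graphs on the same vertex sets with the same left and right
degree sequences are connected by a single `q`-BSO with `q = |E' \ E''|`, whose swapped edges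
are exactly those of `E' \ E''`. -/
theorem stmt_7 {L R : Type*} [Fintype L] [DecidableEq L] [Fintype R] [DecidableEq R]
    (E' E'' : Finset (L × R)) (hne : E' ≠ E'')
    (hldeg : ∀ u : L, ldeg E' u = ldeg E'' u)
    (hrdeg : ∀ a : R, rdeg E' a = rdeg E'' a) :
    ∃ (S : Fin (E' \ E'').card → L × R) (σ : Equiv.Perm (Fin (E' \ E'').card)),
      Function.Injective S ∧
      Finset.image S Finset.univ = E' \ E'' ∧
      (∀ j, σ j ≠ j) ∧
      (∀ j, ((S j).1, (S (σ j)).2) ∉ E') ∧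
      (E' \ Finset.image S Finset.univ) ∪
        Finset.image (fun j => ((S j).1, (S (σ j)).2)) Finset.univ = E'' := by
  classical
  have hfst : ∀ u, ((E' \ E'').filter (fun e => e.1 = u)).card
      = ((E'' \ E').filter (fun e => e.1 = u)).card := by
    intro u
    have h1 : (E'.filter (fun e => e.1 = u)).card
        = ((E' \ E'').filter (fun e => e.1 = u)).card
          + ((E' ∩ E'').filter (fun e => e.1 = u)).card := by
      rw [← Finset.card_union_of_disjoint
        (Finset.disjoint_filter_filter (Finset.disjoint_sdiff_inter E' E'')),
        ← Finset.filter_union, Finset.sdiff_union_inter]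
    have h2 : (E''.filter (fun e => e.1 = u)).card
        = ((E'' \ E').filter (fun e => e.1 = u)).card
          + ((E'' ∩ E').filter (fun e => e.1 = u)).card := by
      rw [← Finset.card_union_of_disjoint
        (Finset.disjoint_filter_filter (Finset.disjoint_sdiff_inter E'' E')),
        ← Finset.filter_union, Finset.sdiff_union_inter]
    have hld : (E'.filter (fun e => e.1 = u)).card = (E''.filter (fun e => e.1 = u)).card := by
      rw [← ldeg_eq_filter, ← ldeg_eq_filter]; exact hldeg u
    rw [Finset.inter_comm E'' E'] at h2
    omega
  have hsnd : ∀ a, ((E'' \ E').filter (fun e => e.2 = a)).card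
      = ((E' \ E'').filter (fun e => e.2 = a)).card := by
    intro a
    have h1 : (E'.filter (fun e => e.2 = a)).card
        = ((E' \ E'').filter (fun e => e.2 = a)).card
          + ((E' ∩ E'').filter (fun e => e.2 = a)).card := by
      rw [← Finset.card_union_of_disjoint
        (Finset.disjoint_filter_filter (Finset.disjoint_sdiff_inter E' E'')),
        ← Finset.filter_union, Finset.sdiff_union_inter]
    have h2 : (E''.filter (fun e => e.2 = a)).card
        = ((E'' \ E').filter (fun e => e.2 = a)).card
          + ((E'' ∩ E').filter (fun e => e.2 = a)).card := by
      rw [← Finset.card_union_of_disjoint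
        (Finset.disjoint_filter_filter (Finset.disjoint_sdiff_inter E'' E')),
        ← Finset.filter_union, Finset.sdiff_union_inter]
    have hrd : (E'.filter (fun e => e.2 = a)).card = (E''.filter (fun e => e.2 = a)).card := by
      rw [← rdeg_eq_filter, ← rdeg_eq_filter]; exact hrdeg a
    rw [Finset.inter_comm E'' E'] at h2
    omega
  obtain ⟨f, hf⟩ := exists_fst_equiv (E' \ E'') (E'' \ E') hfst
  obtain ⟨g, hg⟩ := exists_snd_equiv (E'' \ E') (E' \ E'') hsnd
  let eF : {x // x ∈ E' \ E''} ≃ Fin (E' \ E'').card := (E' \ E'').equivFin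
  refine ⟨fun j => (eF.symm j : L × R), eF.symm.trans (f.trans (g.trans eF)), ?_, ?_, ?_, ?_, ?_⟩
  · exact Subtype.coe_injective.comp eF.symm.injective
  · ext x
    simp only [Finset.mem_image, Finset.mem_univ, true_and]
    constructor
    · rintro ⟨j, rfl⟩; exact (eF.symm j).2
    · intro hx; exact ⟨eF ⟨x, hx⟩, by simp⟩
  · intro j h
    simp only [Equiv.trans_apply, Equiv.symm_apply_apply] at h
    have h' : g (f (eF.symm j)) = eF.symm j := by
      have := congrArg eF.symm h
      simpa using this
    set x := eF.symm j with hx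
    have h1 : ((f x : L × R)).1 = (x : L × R).1 := hf x
    have h2 : ((f x : L × R)).2 = (x : L × R).2 := by
      rw [← hg (f x), h']
    have hval : (f x : L × R) = (x : L × R) := Prod.ext h1 h2
    have hmem1 : (x : L × R) ∈ E' \ E'' := x.2
    have hmem2 : (x : L × R) ∈ E'' \ E' := hval ▸ (f x).2
    simp only [mem_sdiff] at hmem1 hmem2
    exact hmem2.2 hmem1.1
  · intro j
    have hedge : ((eF.symm j : L × R).1,
        ((eF.symm ((eF.symm.trans (f.trans (g.trans eF))) j) : L × R)).2)
        = (f (eF.symm j) : L × R) := by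
      simp only [Equiv.trans_apply, Equiv.symm_apply_apply]
      exact Prod.ext (hf (eF.symm j)).symm (hg (f (eF.symm j)))
    rw [hedge]
    have := (f (eF.symm j)).2
    simp only [mem_sdiff] at this
    exact this.2
  · have hedge : ∀ j, ((eF.symm j : L × R).1,
        ((eF.symm ((eF.symm.trans (f.trans (g.trans eF))) j) : L × R)).2)
        = (f (eF.symm j) : L × R) := by
      intro j
      simp only [Equiv.trans_apply, Equiv.symm_apply_apply]
      exact Prod.ext (hf (eF.symm j)).symm (hg (f (eF.symm j)))
    have himS : Finset.image (fun j => ((eF.symm j : L × R))) Finset.univ = E' \ E'' := by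
      ext x
      simp only [Finset.mem_image, Finset.mem_univ, true_and]
      constructor
      · rintro ⟨j, rfl⟩; exact (eF.symm j).2
      · intro hx; exact ⟨eF ⟨x, hx⟩, by simp⟩
    have himN : Finset.image (fun j => ((eF.symm j : L × R).1,
        ((eF.symm ((eF.symm.trans (f.trans (g.trans eF))) j) : L × R)).2)) Finset.univ
        = E'' \ E' := by
      ext x
      simp only [Finset.mem_image, Finset.mem_univ, true_and]
      constructor
      · rintro ⟨j, rfl⟩
        rw [hedge j]; exact (f (eF.symm j)).2
      · intro hx
        refine ⟨eF (f.symm ⟨x, hx⟩), ?_⟩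
        rw [hedge]
        simp
    rw [himS, himN, Finset.sdiff_sdiff_self_left, Finset.inter_comm,
      Finset.union_comm, Finset.sdiff_union_inter]
end
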